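/- arXiv:2305.19820 — 6 statements merged into one kernel-verified Lean document; each statement's English description precedes it below -/
import Mathlib

section
/- Every finite simple graph G without isolated vertices contains a minimum dominating set D such that every vertex v ∈ D has an external private neighbor, i.e., there exists a vertex w ∉ D with N[w] ∩ D = {v}. -/
variable {V : Type*} [Fintype V]

/-- Closed neighborhood of a set of vertices. -/
def closedN (G : SimpleGraph V) (S : Set V) : Set V := {v | v ∈ S ∨ ∃ u ∈ S, G.Adj u v}

/-- Domination number: minimum cardinality of a dominating set. -/
noncomputable def domNum (G : SimpleGraph V) : ℕ :=
  sInf {k | ∃ S : Set V, S.ncard = k ∧ closedN G S = Set.univ}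

/-- Number of ordered adjacent pairs inside a set. -/
noncomputable def mE (G : SimpleGraph V) (D : Set V) : ℕ :=
  {p : V × V | p.1 ∈ D ∧ p.2 ∈ D ∧ G.Adj p.1 p.2}.ncard

lemma exists_ne_of_ne_singleton {α : Type*} {S : Set α} {v : α} (h : v ∈ S)
    (hne : S ≠ {v}) : ∃ x ∈ S, x ≠ v := by
  by_contra hc
  push_neg at hc
  exact hne (Set.eq_singleton_iff_unique_mem.mpr ⟨h, fun x hx => hc x hx⟩)

/-- Bollobás–Cockayne: every isolate-free graph has a minimum dominating set in which
every vertex has an external private neighbor. -/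
theorem bollobas_cockayne (G : SimpleGraph V)
    (hiso : ∀ v : V, (G.neighborSet v).Nonempty) :
    ∃ D : Set V, closedN G D = Set.univ ∧ D.ncard = domNum G ∧
      ∀ v ∈ D, ∃ w ∉ D, closedN G {w} ∩ D = {v} := by
  classical
  have hdomuniv : closedN G (Set.univ : Set V) = Set.univ := by
    ext w; simp [closedN]
  have hKne : {k | ∃ S : Set V, S.ncard = k ∧ closedN G S = Set.univ}.Nonempty :=
    ⟨_, Set.univ, rfl, hdomuniv⟩
  obtain ⟨D0, hD0card, hD0dom⟩ := Nat.sInf_mem hKne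
  set A : Set ℕ := {n | ∃ D : Set V, closedN G D = Set.univ ∧ D.ncard = domNum G ∧ mE G D = n}
    with hA
  have hAne : A.Nonempty := ⟨mE G D0, D0, hD0dom, hD0card, rfl⟩
  have hAbdd : BddAbove A := by
    refine ⟨Nat.card (V × V), ?_⟩
    rintro n ⟨D, -, -, rfl⟩
    calc mE G D ≤ (Set.univ : Set (V × V)).ncard :=
          Set.ncard_le_ncard (Set.subset_univ _) Set.finite_univ
      _ = Nat.card (V × V) := Set.ncard_univ _
  obtain ⟨D, hDdom, hDcard, hDm⟩ := Nat.sSup_mem hAne hAbdd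
  refine ⟨D, hDdom, hDcard, ?_⟩
  by_contra hbad
  push_neg at hbad
  obtain ⟨v, hvD, hv⟩ := hbad
  have hDdom' := Set.eq_univ_iff_forall.mp hDdom
  -- (a) v has no neighbor in D
  have ha : ∀ d ∈ D, ¬ G.Adj v d := by
    by_contra h
    push_neg at h
    obtain ⟨d, hdD, hadj⟩ := h
    have hdv : d ≠ v := fun he => G.ne_of_adj hadj he.symm
    have hdom' : closedN G (D \ {v}) = Set.univ := by
      rw [Set.eq_univ_iff_forall]
      intro w
      by_cases hw : w = v
      · exact Or.inr ⟨d, ⟨hdD, hdv⟩, hw ▸ hadj.symm⟩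
      · by_cases hwD : w ∈ D
        · exact Or.inl ⟨hwD, hw⟩
        · rcases hDdom' w with h1 | ⟨u, huD, hadj'⟩
          · exact absurd h1 hwD
          · by_cases huv : u = v
            · rw [huv] at hadj'
              have hvmem : v ∈ closedN G {w} ∩ D := ⟨Or.inr ⟨w, rfl, hadj'.symm⟩, hvD⟩
              obtain ⟨x, ⟨hx1, hx2⟩, hxv⟩ := exists_ne_of_ne_singleton hvmem (hv w hwD)
              have hxw : G.Adj x w := by
                rcases hx1 with h | ⟨u', hu', hadj''⟩
                · exact absurd (h ▸ hx2) hwD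
                · rw [Set.mem_singleton_iff] at hu'; exact (hu' ▸ hadj'').symm
              exact Or.inr ⟨x, ⟨hx2, hxv⟩, hxw⟩
            · exact Or.inr ⟨u, ⟨huD, huv⟩, hadj'⟩
    have hle : domNum G ≤ (D \ {v}).ncard :=
      Nat.sInf_le ⟨D \ {v}, rfl, hdom'⟩
    have hplus : (D \ {v}).ncard + 1 = D.ncard := Set.ncard_diff_singleton_add_one hvD
    omega
  -- get a neighbor u of v
  obtain ⟨u, hu⟩ := hiso v
  have hadj : G.Adj v u := hu
  have huD : u ∉ D := fun h => ha u h hadj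
  have huv : u ≠ v := fun h => G.ne_of_adj hadj h.symm
  -- u has a neighbor x in D, x ≠ v
  have hvmem : v ∈ closedN G {u} ∩ D := ⟨Or.inr ⟨u, rfl, hadj.symm⟩, hvD⟩
  obtain ⟨x, ⟨hx1, hxD⟩, hxv⟩ := exists_ne_of_ne_singleton hvmem (hv u huD)
  have hux : G.Adj u x := by
    rcases hx1 with h | ⟨u', hu', hadj''⟩
    · exact absurd (h ▸ hxD) huD
    · rw [Set.mem_singleton_iff] at hu'; exact hu' ▸ hadj''
  -- the swap
  set D' : Set V := insert u (D \ {v}) with hD'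
  have hD'dom : closedN G D' = Set.univ := by
    rw [Set.eq_univ_iff_forall]
    intro w
    by_cases hw : w = v
    · exact Or.inr ⟨u, Set.mem_insert _ _, hw ▸ hadj.symm⟩
    · by_cases hwD : w ∈ D
      · exact Or.inl (Set.mem_insert_of_mem _ ⟨hwD, hw⟩)
      · rcases hDdom' w with h1 | ⟨d, hdD, hadj'⟩
        · exact absurd h1 hwD
        · by_cases hdv : d = v
          · rw [hdv] at hadj'
            have hvmem' : v ∈ closedN G {w} ∩ D := ⟨Or.inr ⟨w, rfl, hadj'.symm⟩, hvD⟩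
            obtain ⟨y, ⟨hy1, hyD⟩, hyv⟩ := exists_ne_of_ne_singleton hvmem' (hv w hwD)
            have hyw : G.Adj y w := by
              rcases hy1 with h | ⟨u', hu', hadj''⟩
              · exact absurd (h ▸ hyD) hwD
              · rw [Set.mem_singleton_iff] at hu'; exact (hu' ▸ hadj'').symm
            exact Or.inr ⟨y, Set.mem_insert_of_mem _ ⟨hyD, hyv⟩, hyw⟩
          · exact Or.inr ⟨d, Set.mem_insert_of_mem _ ⟨hdD, hdv⟩, hadj'⟩
  have huD'' : u ∉ D \ {v} := fun h => huD h.1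
  have hD'card : D'.ncard = domNum G := by
    have h1 : D'.ncard = (D \ {v}).ncard + 1 := Set.ncard_insert_of_notMem huD''
    have h2 : (D \ {v}).ncard + 1 = D.ncard := Set.ncard_diff_singleton_add_one hvD
    omega
  -- mE G D = mE G (D \ {v})
  have hmeq : mE G D = mE G (D \ {v}) := by
    unfold mE
    congr 1
    ext ⟨a, b⟩
    simp only [Set.mem_setOf_eq, Set.mem_diff, Set.mem_singleton_iff]
    constructor
    · rintro ⟨haD, hbD, hab⟩
      refine ⟨⟨haD, ?_⟩, ⟨hbD, ?_⟩, hab⟩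
      · rintro rfl; exact ha b hbD hab
      · rintro rfl; exact ha a haD hab.symm
    · rintro ⟨⟨haD, -⟩, ⟨hbD, -⟩, hab⟩
      exact ⟨haD, hbD, hab⟩
  -- mE G (D \ {v}) < mE G D'
  have hlt : mE G (D \ {v}) < mE G D' := by
    apply Set.ncard_lt_ncard
    · constructor
      · rintro ⟨a, b⟩ ⟨haD, hbD, hab⟩
        exact ⟨Set.mem_insert_of_mem _ haD, Set.mem_insert_of_mem _ hbD, hab⟩
      · intro hsub
        have : (u, x) ∈ {p : V × V | p.1 ∈ D' ∧ p.2 ∈ D' ∧ G.Adj p.1 p.2} :=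
          ⟨Set.mem_insert _ _, Set.mem_insert_of_mem _ ⟨hxD, hxv⟩, hux⟩
        have := hsub this
        exact huD this.1.1
    · exact Set.toFinite _
  have hle' : mE G D' ≤ sSup A := le_csSup hAbdd ⟨D', hD'dom, hD'card, rfl⟩
  omega
end

section
/- If G is a connected cubic (3-regular) graph of order n ≥ 28 and the domination number of G satisfies γ(G) ≤ ⌊(5/14)n⌋, then there exists a set S of at most n/3 vertices with |N[S]| ≥ (13/14)n. -/
variable {V : Type*} [Fintype V]

/-!
Take a minimum dominating set `D`, so `|D| ≤ ⌊5n/14⌋`, and send every vertex to a vertex of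
`D` dominating it. If `|D| ≤ ⌊n/3⌋`, then `D` itself works. Otherwise keep `m = ⌊n/3⌋` vertices
of `D`, chosen so that either every kept vertex receives at least `3` vertices, and then at least
`3m ≥ n - 2` vertices are dominated, or every discarded vertex receives at most `2`, and then at
most `2(|D| - m) ≤ 2(⌊5n/14⌋ - ⌊n/3⌋) ≤ n/14` vertices are lost.
-/

open Finset

theorem Finset.exists_subset_card_eq_forall_lt_or_forall_le {α : Type*} [DecidableEq α]
    (D : Finset α) (c : α → ℕ) (t : ℕ) {m : ℕ} (hm : m ≤ #D) :
    ∃ S ⊆ D, #S = m ∧ ((∀ v ∈ S, t < c v) ∨ ∀ v ∈ D \ S, c v ≤ t) := by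
  set H := D.filter (t < c ·)
  rcases le_total m #H with hH | hH
  · obtain ⟨S, hSH, hS⟩ := exists_subset_card_eq hH
    exact ⟨S, hSH.trans (filter_subset _ _), hS, .inl fun v hv => (mem_filter.1 (hSH hv)).2⟩
  · obtain ⟨S, hHS, hSD, hS⟩ := exists_subsuperset_card_eq (filter_subset _ D) hH hm
    refine ⟨S, hSD, hS, .inr fun v hv => ?_⟩
    rw [mem_sdiff] at hv
    exact not_lt.1 fun h => hv.2 (hHS (mem_filter.2 ⟨hv.1, h⟩))

namespace SimpleGraph

theorem exists_dominator {α : Type*} {G : SimpleGraph α} {D : Set α}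
    (hD : closedN G D = Set.univ) :
    ∃ d : α → α, (∀ u, d u ∈ D) ∧ ∀ S, d ⁻¹' S ⊆ closedN G S := by
  have (u : α) : ∃ w ∈ D, w = u ∨ G.Adj w u := by
    rcases hD.symm ▸ Set.mem_univ u with hu | ⟨w, hw, hwu⟩
    exacts [⟨u, hu, .inl rfl⟩, ⟨w, hw, .inr hwu⟩]
  choose d hdD hd using this
  refine ⟨d, hdD, fun S u hu => ?_⟩
  rcases hd u with h | h
  · exact .inl (h ▸ hu)
  · exact .inr ⟨d u, hu, h⟩

theorem exists_finset_card_eq_domNum (G : SimpleGraph V) :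
    ∃ D : Finset V, #D = domNum G ∧ closedN G D = Set.univ := by
  classical
  obtain ⟨D, hD, hdom⟩ :
      domNum G ∈ {k | ∃ S : Set V, S.ncard = k ∧ closedN G S = Set.univ} :=
    Nat.sInf_mem ⟨_, Set.univ, rfl, Set.eq_univ_of_forall fun v => Or.inl trivial⟩
  exact ⟨D.toFinset, by rw [← hD, Set.ncard_eq_toFinset_card'], by simpa using hdom⟩

theorem exists_subset_card_eq_closedN_ge {G : SimpleGraph V} {D : Finset V}
    (hD : closedN G D = Set.univ) (t : ℕ) {m : ℕ} (hm : m ≤ #D) :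
    ∃ S ⊆ D, #S = m ∧ ((t + 1) * m ≤ (closedN G S).ncard ∨
      Fintype.card V ≤ (closedN G S).ncard + t * (#D - m)) := by
  classical
  obtain ⟨d, hdD, hdN⟩ := exists_dominator hD
  obtain ⟨S, hSD, hS, hheavy_or_light⟩ :=
    D.exists_subset_card_eq_forall_lt_or_forall_le (fun v => #{u | d u = v}) t hm
  have card_preimage (T : Finset V) : #{u | d u ∈ T} = ∑ v ∈ T, #{u | d u = v} :=
    (sum_card_fiberwise_eq_card_filter _ _ _).symm
  have hcov : #{u | d u ∈ S} ≤ (closedN G S).ncard := by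
    rw [← Set.ncard_coe_finset]
    exact Set.ncard_le_ncard fun u hu => hdN S (by simpa using hu)
  have hsplit : #{u | d u ∈ S} + #{u | d u ∈ D \ S} = Fintype.card V := by
    rw [← card_univ, ← card_filter_add_card_filter_not (s := univ) (fun u => d u ∈ S)]
    congr 2
    ext u
    simpa using fun _ => mem_coe.1 (hdD u)
  refine ⟨S, hSD, hS, hheavy_or_light.imp (fun heavy => ?_) (fun light => ?_)⟩
  · have := card_nsmul_le_sum S _ _ fun v hv => Nat.succ_le_of_lt (heavy v hv)
    rw [smul_eq_mul, hS, ← card_preimage] at this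
    linarith
  · have := sum_le_card_nsmul (D \ S) _ _ light
    rw [smul_eq_mul, card_sdiff_of_subset hSD, hS, ← card_preimage] at this
    linarith

end SimpleGraph

theorem Nat.five_mul_div_fourteen_sub_div_three_le {n : ℕ} (hn : 28 ≤ n) :
    28 * (5 * n / 14 - n / 3) ≤ n := by
  rcases lt_or_ge n 56 with h | h
  · interval_cases n <;> norm_num
  · omega

theorem pd_thirteen_fourteenths_general (G : SimpleGraph V) (n : ℕ) (hn : Fintype.card V = n)
    (h28 : 28 ≤ n)
    (hdom : domNum G ≤ 5 * n / 14) :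
    ∃ S : Set V, (S.ncard : ℚ) ≤ n / 3 ∧ (13 : ℚ) / 14 * n ≤ (closedN G S).ncard := by
  suffices ∃ S : Set V, 3 * S.ncard ≤ n ∧ 13 * n ≤ 14 * (closedN G S).ncard by
    obtain ⟨S, hS, hcov⟩ := this
    refine ⟨S, ?_, ?_⟩
    · rw [le_div_iff₀ (by norm_num)]; exact_mod_cast (by omega : S.ncard * 3 ≤ n)
    · rw [div_mul_eq_mul_div, div_le_iff₀ (by norm_num)]
      exact_mod_cast (by omega : 13 * n ≤ (closedN G S).ncard * 14)
  obtain ⟨D, hD, hDdom⟩ := G.exists_finset_card_eq_domNum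
  rcases le_or_gt #D (n / 3) with hsmall | hlarge
  · refine ⟨D, ?_, ?_⟩
    · rw [Set.ncard_coe_finset]; omega
    · rw [hDdom, Set.ncard_univ, Nat.card_eq_fintype_card]; omega
  · obtain ⟨S, -, hS, hcov⟩ := SimpleGraph.exists_subset_card_eq_closedN_ge hDdom 2 hlarge.le
    refine ⟨S, by rw [Set.ncard_coe_finset]; omega, ?_⟩
    have := Nat.five_mul_div_fourteen_sub_div_three_le h28
    rw [hn] at hcov
    omega

/-- If `G` is a connected cubic graph of order `n ≥ 28` with `γ(G) ≤ ⌊5n/14⌋`, then some set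
of at most `n/3` vertices dominates at least `(13/14)n` vertices. -/
theorem pd_thirteen_fourteenths (G : SimpleGraph V) (n : ℕ) (hn : Fintype.card V = n)
    (h28 : 28 ≤ n) (hconn : G.Connected) (hcub : ∀ v : V, (G.neighborSet v).ncard = 3)
    (hdom : domNum G ≤ 5 * n / 14) :
    ∃ S : Set V, (S.ncard : ℚ) ≤ n / 3 ∧ (13 : ℚ) / 14 * n ≤ (closedN G S).ncard :=
  pd_thirteen_fourteenths_general G n hn h28 hdom
end

section
/- If G is a graph of order 8 with minimum degree at least 3 and maximum degree at least 4, then there exist two vertices u and u' with |N[{u,u'}]| ≥ 7. -/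
variable {V : Type*} [Fintype V]

lemma closedN_pair (G : SimpleGraph V) (u u' : V) :
    closedN G {u, u'} = (insert u (G.neighborSet u)) ∪ (insert u' (G.neighborSet u')) := by
  ext w
  simp only [closedN, Set.mem_setOf_eq, Set.mem_insert_iff, Set.mem_union,
    SimpleGraph.mem_neighborSet, Set.mem_singleton_iff]
  constructor
  · rintro (h | ⟨z, hz, hadj⟩)
    · tauto
    · rcases hz with rfl | rfl <;> tauto
  · rintro ((h | h) | (h | h)) <;> [tauto; exact Or.inr ⟨u, by tauto⟩;
      tauto; exact Or.inr ⟨u', by tauto⟩]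

/-- In a graph of order 8 with `δ ≥ 3` and `Δ ≥ 4`, two vertices dominate at least 7 vertices. -/
theorem supercubic_order8 (G : SimpleGraph V) (h8 : Fintype.card V = 8)
    (hmin : ∀ v : V, 3 ≤ (G.neighborSet v).ncard)
    (hmax : ∃ v : V, 4 ≤ (G.neighborSet v).ncard) :
    ∃ u u' : V, 7 ≤ (closedN G {u, u'}).ncard := by
  obtain ⟨v, hv⟩ := hmax
  set Nv : Set V := insert v (G.neighborSet v) with hNvdef
  have hvnot : v ∉ G.neighborSet v := by simp
  have hNvcard : Nv.ncard = (G.neighborSet v).ncard + 1 :=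
    Set.ncard_insert_of_notMem hvnot
  have h5 : 5 ≤ Nv.ncard := by omega
  have hcompl : Nv.ncard + Nvᶜ.ncard = 8 := by
    rw [← h8, ← Nat.card_eq_fintype_card]; exact Set.ncard_add_ncard_compl Nv
  -- helper: if x, y ∉ Nv are distinct and both dominated along with Nv, we win
  have key : ∀ x y : V, x ∉ Nv → y ∉ Nv → x ≠ y →
      ∀ u' : V, insert x (insert y Nv) ⊆ closedN G {v, u'} →
      7 ≤ (closedN G {v, u'}).ncard := by
    intro x y hx hy hxy u' hsub
    have h1 : (insert x (insert y Nv)).ncard = Nv.ncard + 2 := by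
      rw [Set.ncard_insert_of_notMem (by simp [hxy, hy, Set.mem_insert_iff]; tauto),
        Set.ncard_insert_of_notMem hy]
    have := Set.ncard_le_ncard hsub (Set.toFinite _)
    omega
  by_cases h7 : 7 ≤ Nv.ncard
  · refine ⟨v, v, ?_⟩
    rw [closedN_pair, Set.union_self]
    exact h7
  · -- there is a vertex outside Nv
    have hpos : 0 < Nvᶜ.ncard := by omega
    obtain ⟨x, hx⟩ := (Set.ncard_pos (Set.toFinite _)).mp hpos
    have hxNv : x ∉ Nv := hx
    by_cases h6 : Nv.ncard = 6
    · -- (v, x) covers Nv ∪ {x}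
      refine ⟨v, x, ?_⟩
      rw [closedN_pair, ← hNvdef]
      have hsub : insert x Nv ⊆ Nv ∪ insert x (G.neighborSet x) := by
        intro w hw
        rcases hw with rfl | hw
        · exact Or.inr (Set.mem_insert _ _)
        · exact Or.inl hw
      have h1 : (insert x Nv).ncard = Nv.ncard + 1 := Set.ncard_insert_of_notMem hxNv
      have := Set.ncard_le_ncard hsub (Set.toFinite _)
      omega
    · -- Nv.ncard = 5
      have h5e : Nv.ncard = 5 := by omega
      by_cases hext : ∃ x' : V, x' ∉ Nv ∧ ∃ y : V, G.Adj x' y ∧ y ∉ Nv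
      · obtain ⟨x', hx', y, hadj, hy⟩ := hext
        refine ⟨v, x', key x' y hx' hy (fun h => G.irrefl (h ▸ hadj)) x' ?_⟩
        rw [closedN_pair]
        intro w hw
        rcases hw with rfl | rfl | hw
        · exact Or.inr (Set.mem_insert _ _)
        · exact Or.inr (Set.mem_insert_of_mem _ hadj)
        · exact Or.inl hw
      · push_neg at hext
        -- every outside vertex has all neighbors inside N(v)
        have hnbr : ∀ x' : V, x' ∉ Nv → G.neighborSet x' ⊆ G.neighborSet v := by
          intro x' hx' y hy
          have hyNv : y ∈ Nv := hext x' hx' y hy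
          rcases hyNv with rfl | hyNv
          · exact absurd (Set.mem_insert_of_mem _ hy.symm) hx'
          · exact hyNv
        have hNvdeg : (G.neighborSet v).ncard = 4 := by omega
        -- get a second outside vertex
        have h2 : 1 < Nvᶜ.ncard := by omega
        obtain ⟨x2, hx2, hx2ne⟩ := Set.exists_ne_of_one_lt_ncard h2 x
        have hx2Nv : x2 ∉ Nv := hx2
        -- common neighbor of x and x2
        have hu : (G.neighborSet x ∪ G.neighborSet x2) ⊆ G.neighborSet v :=
          Set.union_subset (hnbr x hxNv) (hnbr x2 hx2Nv)
        have huc : (G.neighborSet x ∪ G.neighborSet x2).ncard ≤ 4 := by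
          rw [← hNvdeg]; exact Set.ncard_le_ncard hu (Set.toFinite _)
        have hie := Set.ncard_inter_add_ncard_union (G.neighborSet x) (G.neighborSet x2)
          (Set.toFinite _) (Set.toFinite _)
        have hxc := hmin x
        have hx2c := hmin x2
        have hipos : 0 < (G.neighborSet x ∩ G.neighborSet x2).ncard := by omega
        obtain ⟨a, hax, hax2⟩ := (Set.ncard_pos (Set.toFinite _)).mp hipos
        refine ⟨v, a, key x2 x hx2Nv hxNv hx2ne a ?_⟩
        rw [closedN_pair]
        intro w hw
        rcases hw with rfl | rfl | hw
        · exact Or.inr (Set.mem_insert_of_mem _ hax2.symm)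
        · exact Or.inr (Set.mem_insert_of_mem _ hax.symm)
        · exact Or.inl hw
end

section
/- If G is a graph of order 11 with minimum degree at least 3 and maximum degree at least 4, then there exist three vertices v₁, v₂, v₃ with |N[{v₁,v₂,v₃}]| ≥ 10. -/
variable {V : Type*} [Fintype V]

/-- In a graph of order 11 with `δ ≥ 3` and `Δ ≥ 4`, three vertices dominate at least 10 vertices. -/
theorem supercubic_order11 (G : SimpleGraph V) (h11 : Fintype.card V = 11)
    (hmin : ∀ v : V, 3 ≤ (G.neighborSet v).ncard)
    (hmax : ∃ v : V, 4 ≤ (G.neighborSet v).ncard) :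
    ∃ v₁ v₂ v₃ : V, 10 ≤ (closedN G {v₁, v₂, v₃}).ncard := by
  classical
  set cN : V → Finset V := fun w => insert w (G.neighborFinset w) with hcN
  have hcard : ∀ u : V, (cN u).card = (G.neighborSet u).ncard + 1 := by
    intro u
    have h1 : (G.neighborSet u).ncard = (G.neighborFinset u).card := by
      rw [Set.ncard_eq_toFinset_card']
      simp [SimpleGraph.neighborFinset]
    rw [hcN]
    simp only []
    rw [Finset.card_insert_of_notMem (SimpleGraph.notMem_neighborFinset_self G u), h1]
  have hdeg : ∀ u : V, 4 ≤ (cN u).card := by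
    intro u
    have := hmin u
    rw [hcard u]
    omega
  have hsym : ∀ u w : V, (u ∈ cN w) = (w ∈ cN u) := by
    intro u w
    simp only [hcN, Finset.mem_insert, SimpleGraph.mem_neighborFinset]
    apply propext
    constructor
    · rintro (rfl | h)
      · exact Or.inl rfl
      · exact Or.inr h.symm
    · rintro (rfl | h)
      · exact Or.inl rfl
      · exact Or.inr h.symm
  have huniv : (Finset.univ : Finset V).card = 11 := by
    rw [Finset.card_univ, h11]
  have hne : (Finset.univ : Finset V).Nonempty := by
    rw [← Finset.card_pos, huniv]; omega
  -- key averaging lemma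
  have key : ∀ U : Finset V, ∃ w : V, 11 * (U \ cN w).card ≤ 7 * U.card := by
    intro U
    have hsum : ∑ w : V, (U ∩ cN w).card = ∑ u ∈ U, (cN u).card := by
      have h1 : ∀ w : V, (U ∩ cN w).card = ∑ u ∈ U, if u ∈ cN w then 1 else 0 := by
        intro w
        rw [← Finset.filter_mem_eq_inter, Finset.card_filter]
      have h2 : ∀ u : V, (cN u).card = ∑ w : V, if u ∈ cN w then 1 else 0 := by
        intro u
        have : (cN u).card = ∑ w : V, if w ∈ cN u then 1 else 0 := by
          rw [← Finset.card_filter]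
          congr 1
          rw [Finset.filter_mem_eq_inter, Finset.univ_inter]
        rw [this]
        apply Finset.sum_congr rfl
        intro w _
        simp only [hsym u w]
      simp only [h1, h2]
      exact Finset.sum_comm
    have hlow : 4 * U.card ≤ ∑ w : V, (U ∩ cN w).card := by
      rw [hsum]
      calc 4 * U.card = ∑ _u ∈ U, 4 := by rw [Finset.sum_const, smul_eq_mul]; ring
        _ ≤ ∑ u ∈ U, (cN u).card := Finset.sum_le_sum fun u _ => hdeg u
    have havg : ∃ w : V, 4 * U.card ≤ 11 * (U ∩ cN w).card := by
      have hs : ∑ _w : V, 4 * U.card ≤ ∑ w : V, 11 * (U ∩ cN w).card := by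
        rw [Finset.sum_const, smul_eq_mul, huniv, ← Finset.mul_sum]
        calc 11 * (4 * U.card) = 11 * (4 * U.card) := rfl
          _ ≤ 11 * ∑ w : V, (U ∩ cN w).card := by
              exact Nat.mul_le_mul_left 11 hlow
      obtain ⟨w, -, hw⟩ := Finset.exists_le_of_sum_le hne hs
      exact ⟨w, hw⟩
    obtain ⟨w, hw⟩ := havg
    refine ⟨w, ?_⟩
    have hsplit : (U \ cN w).card + (U ∩ cN w).card = U.card :=
      Finset.card_sdiff_add_card_inter U (cN w)
    omega
  -- start with a vertex of degree ≥ 4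
  obtain ⟨v₀, hv₀⟩ := hmax
  have hcN0 : 5 ≤ (cN v₀).card := by rw [hcard v₀]; omega
  set U₀ : Finset V := Finset.univ \ cN v₀ with hU₀
  have hU₀card : U₀.card ≤ 6 := by
    have h := Finset.card_sdiff_add_card_eq_card (Finset.subset_univ (cN v₀))
    rw [← hU₀] at h
    omega
  obtain ⟨w₁, hw₁⟩ := key U₀
  obtain ⟨w₂, hw₂⟩ := key (U₀ \ cN w₁)
  have hU2 : ((U₀ \ cN w₁) \ cN w₂).card ≤ 1 := by omega
  refine ⟨v₀, w₁, w₂, ?_⟩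
  have hset : closedN G {v₀, w₁, w₂} = ↑(cN v₀ ∪ cN w₁ ∪ cN w₂) := by
    ext x
    simp only [closedN, Set.mem_setOf_eq, Set.mem_insert_iff, Set.mem_singleton_iff,
      Finset.coe_union, Set.mem_union, Finset.mem_coe, hcN, Finset.mem_insert,
      SimpleGraph.mem_neighborFinset]
    constructor
    · rintro (h | ⟨u, hu, hadj⟩)
      · tauto
      · rcases hu with rfl | rfl | rfl <;> tauto
    · rintro (((rfl | h) | (rfl | h)) | (rfl | h))
      · tauto
      · exact Or.inr ⟨v₀, by tauto, h⟩
      · tauto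
      · exact Or.inr ⟨w₁, by tauto, h⟩
      · tauto
      · exact Or.inr ⟨w₂, by tauto, h⟩
  rw [hset, Set.ncard_coe_finset]
  have hcompl : Finset.univ \ (cN v₀ ∪ cN w₁ ∪ cN w₂) = (U₀ \ cN w₁) \ cN w₂ := by
    ext x
    simp only [Finset.mem_sdiff, Finset.mem_union, Finset.mem_univ, true_and, hU₀]
    tauto
  have hfull := Finset.card_sdiff_add_card_eq_card
    (Finset.subset_univ (cN v₀ ∪ cN w₁ ∪ cN w₂))
  rw [hcompl] at hfull
  omega
end

section
/- If G is a graph of order 14 with minimum degree at least 3 and maximum degree at least 4, then there exist four vertices whose closed neighborhood has at least 13 elements. -/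
variable {V : Type*} [Fintype V]

/-!
Let `v` be a vertex of maximum degree `Δ ≥ 4` and `W = V ∖ N[v]`, so `|W| = 13 - Δ ≤ 9`. Each
`w ∈ W` lies in exactly `deg w + 1 ∈ [4, Δ + 1]` of the 13 closed neighbourhoods `N[x]`, `x ≠ v`,
so it suffices to find three of these sets covering all of `W` but one vertex. This is a statement
about a family of 13 sets, proved by double counting incidences.

If one set leaves at most five points of `W` uncovered, two more sets suffice: otherwise their
traces of size two on those five points pairwise meet, hence form a star or lie in a triangle, and
either way too few incidences remain. If every set leaves at least six points uncovered, counting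
forces `|W| = 9`, so all points have degree 4 or 5 and all traces have size at most three. If
moreover no three sets cover eight points, the (at least ten) traces of size three pairwise meet,
and counting yields three of them forming a sunflower with kernel `{z}`. A triple avoiding `z` then
lies inside the sunflower, so every triple meets the two uncovered points at most once, and only if
it contains `z`: too few incidences for those two points.
-/

open Finset

namespace Finset

variable {ι α : Type*} [DecidableEq α]

theorem card_sdiff_inter_add_card_le (R X Y : Finset α) : #((R \ X) ∩ Y) + #X ≤ #(X ∪ Y) := by
  rw [← card_union_of_disjoint (disjoint_left.mpr fun u hu hX => (mem_sdiff.mp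
    (mem_inter.mp hu).1).2 hX)]
  exact card_le_card (union_subset (fun u hu => mem_union_right _ (mem_inter.mp hu).2)
    subset_union_left)

theorem exists_card_le_three_of_intersecting {D : Finset ι} {e : ι → Finset α}
    (he : ∀ i ∈ D, #(e i) = 2) (hmeet : ∀ i ∈ D, ∀ j ∈ D, (e i ∩ e j).Nonempty)
    (hfree : ∀ p, ∃ i ∈ D, p ∉ e i) : ∃ K : Finset α, #K ≤ 3 ∧ ∀ i ∈ D, e i ⊆ K := by
  rcases D.eq_empty_or_nonempty with rfl | ⟨i₀, hi₀⟩
  · exact ⟨∅, by simp, by simp⟩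
  obtain ⟨a, b, hab, he₀⟩ := card_eq_two.mp (he i₀ hi₀)
  obtain ⟨i₁, hi₁, ha₁⟩ := hfree a
  obtain ⟨i₂, hi₂, hb₂⟩ := hfree b
  have other : ∀ {i x y}, i ∈ D → x ∉ e i → (x = a ∧ y = b ∨ x = b ∧ y = a) → y ∈ e i := by
    rintro i x y hi hx hxy
    obtain ⟨m, hm⟩ := hmeet i hi i₀ hi₀
    simp only [mem_inter, he₀, mem_insert, mem_singleton] at hm
    rcases hxy with ⟨rfl, rfl⟩ | ⟨rfl, rfl⟩ <;> rcases hm with ⟨hm, rfl | rfl⟩ <;> tauto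
  have hb₁ : b ∈ e i₁ := other hi₁ ha₁ (.inl ⟨rfl, rfl⟩)
  have ha₂ : a ∈ e i₂ := other hi₂ hb₂ (.inr ⟨rfl, rfl⟩)
  obtain ⟨c, hc⟩ := hmeet i₁ hi₁ i₂ hi₂
  rw [mem_inter] at hc
  have pair_eq : ∀ {s : Finset α} {x y : α}, #s = 2 → x ∈ s → y ∈ s → x ≠ y → s = {x, y} :=
    fun hs hx hy hxy => (eq_of_subset_of_card_le (by simp [insert_subset_iff, hx, hy])
      (by rw [card_pair hxy, hs])).symm
  have he₁ : e i₁ = {b, c} := pair_eq (he i₁ hi₁) hb₁ hc.1 (by rintro rfl; exact hb₂ hc.2)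
  have he₂ : e i₂ = {a, c} := pair_eq (he i₂ hi₂) ha₂ hc.2 (by rintro rfl; exact ha₁ hc.1)
  refine ⟨{a, b, c}, card_le_three, fun i hi u hu => ?_⟩
  by_contra huK
  -- `e i = {u, m}` meets `e i₀`, `e i₁`, `e i₂` outside `u`, so `m ∈ {a, b} ∩ {b, c} ∩ {a, c}`.
  have hmeet' : ∀ k ∈ D, e k ⊆ {a, b, c} → ∃ m ∈ e k, m ∈ (e i).erase u := by
    intro k hk hkK
    obtain ⟨m, hm⟩ := hmeet k hk i hi
    rw [mem_inter] at hm
    exact ⟨m, hm.1, mem_erase.mpr ⟨fun h => huK (h ▸ hkK hm.1), hm.2⟩⟩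
  have hone : #((e i).erase u) ≤ 1 := by rw [card_erase_of_mem hu, he i hi]
  obtain ⟨m, h₀, hm₀⟩ := hmeet' i₀ hi₀ (by simp [he₀, insert_subset_iff])
  obtain ⟨m₁, h₁, hm₁⟩ := hmeet' i₁ hi₁ (by simp [he₁])
  obtain ⟨m₂, h₂, hm₂⟩ := hmeet' i₂ hi₂ (by simp [he₂, insert_subset_iff])
  obtain rfl := card_le_one.mp hone _ hm₀ _ hm₁
  obtain rfl := card_le_one.mp hone _ hm₀ _ hm₂
  rw [he₀, mem_insert, mem_singleton] at h₀
  rcases h₀ with rfl | rfl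
  exacts [ha₁ h₁, hb₂ h₂]

theorem inter_eq_singleton_of_card_inter_union_le_one {A B C : Finset α} {z : α}
    (hAB : A ∩ B = {z}) (hC : #(C ∩ (A ∪ B)) ≤ 1) (hCA : (C ∩ A).Nonempty)
    (hCB : (C ∩ B).Nonempty) : C ∩ A = {z} ∧ C ∩ B = {z} := by
  obtain ⟨y, hy⟩ := hCA
  obtain ⟨y', hy'⟩ := hCB
  rw [mem_inter] at hy hy'
  have to_union : ∀ {u}, u ∈ C → (u ∈ A ∨ u ∈ B) → u ∈ C ∩ (A ∪ B) :=
    fun hu hAB => mem_inter.mpr ⟨hu, mem_union.mpr hAB⟩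
  obtain rfl : y = y' := card_le_one.mp hC _ (to_union hy.1 (.inl hy.2)) _
    (to_union hy'.1 (.inr hy'.2))
  obtain rfl : y = z := mem_singleton.mp (hAB ▸ mem_inter.mpr ⟨hy.2, hy'.2⟩)
  have eq_y : ∀ {u}, u ∈ C → (u ∈ A ∨ u ∈ B) → u = y :=
    fun hu hAB => card_le_one.mp hC _ (to_union hu hAB) _ (to_union hy.1 (.inl hy.2))
  refine ⟨eq_singleton_iff_unique_mem.mpr ⟨mem_inter.mpr hy, fun u hu => ?_⟩,
    eq_singleton_iff_unique_mem.mpr ⟨mem_inter.mpr hy', fun u hu => ?_⟩⟩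
  · exact eq_y (mem_inter.mp hu).1 (.inl (mem_inter.mp hu).2)
  · exact eq_y (mem_inter.mp hu).1 (.inr (mem_inter.mp hu).2)

theorem subset_union_of_inter_eq_singleton {A B C X : Finset α} {z : α} (hAB : A ∩ B = {z})
    (hCA : C ∩ A = {z}) (hCB : C ∩ B = {z}) (hzX : z ∉ X) (hX : #X ≤ 3)
    (hXA : (X ∩ A).Nonempty) (hXB : (X ∩ B).Nonempty) (hXC : (X ∩ C).Nonempty) :
    X ⊆ A ∪ B ∪ C := by
  obtain ⟨p, hp⟩ := hXA
  obtain ⟨q, hq⟩ := hXB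
  obtain ⟨r, hr⟩ := hXC
  rw [mem_inter] at hp hq hr
  have off_core : ∀ {U W : Finset α} {u : α}, U ∩ W = {z} → u ∈ U → u ∈ W → u ∉ X := by
    intro U W u h hU hW hu
    exact hzX (mem_singleton.mp (h ▸ mem_inter.mpr ⟨hU, hW⟩) ▸ hu)
  have hpq : p ≠ q := by rintro rfl; exact off_core hAB hp.2 hq.2 hp.1
  have hpr : p ≠ r := by rintro rfl; exact off_core hCA hr.2 hp.2 hp.1
  have hqr : q ≠ r := by rintro rfl; exact off_core hCB hr.2 hq.2 hq.1
  have hpqr : {p, q, r} = X := eq_of_subset_of_card_le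
    (by simp [insert_subset_iff, hp.1, hq.1, hr.1])
    (by rw [card_insert_of_notMem (by simp [hpq, hpr]), card_pair hqr]; exact hX)
  rw [← hpqr]
  simp [insert_subset_iff, hp.2, hq.2, hr.2]

theorem card_sdiff_le_one_of_inter_eq_singleton {A B C X Y : Finset α} {z : α}
    (hAB : A ∩ B = {z}) (hCA : C ∩ A = {z}) (hCB : C ∩ B = {z}) (hX : #X = 3) (hzX : z ∈ X)
    (hzY : z ∉ Y) (hY : #Y ≤ 3) (hYA : (Y ∩ A).Nonempty) (hYB : (Y ∩ B).Nonempty)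
    (hYC : (Y ∩ C).Nonempty) (hXY : (X ∩ Y).Nonempty) : #(X \ (A ∪ B ∪ C)) ≤ 1 := by
  obtain ⟨u, hu⟩ := hXY
  rw [mem_inter] at hu
  have hzA : z ∈ A := mem_of_mem_inter_left (hAB ▸ mem_singleton_self z)
  have hzu : z ≠ u := fun h => hzY (h ▸ hu.2)
  have huU := subset_union_of_inter_eq_singleton hAB hCA hCB hzY hY hYA hYB hYC hu.2
  have := card_le_card (show {z, u} ⊆ X ∩ (A ∪ B ∪ C) by
    simp only [insert_subset_iff, singleton_subset_iff, mem_inter]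
    exact ⟨⟨hzX, mem_union_left _ (mem_union_left _ hzA)⟩, hu.1, huU⟩)
  rw [card_pair hzu] at this
  have := card_inter_add_card_sdiff X (A ∪ B ∪ C)
  omega

end Finset

namespace FamilyCover

variable {ι α : Type*} [DecidableEq α]

def degree (E : Finset ι) (S : ι → Finset α) (w : α) : ℕ := #{i ∈ E | w ∈ S i}

variable {E : Finset ι} {S : ι → Finset α} {R : Finset α}

theorem sum_card_inter_eq_sum_degree (E : Finset ι) (S : ι → Finset α) (R : Finset α) :
    ∑ i ∈ E, #(R ∩ S i) = ∑ w ∈ R, degree E S w := by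
  simp only [degree, card_filter, ← filter_mem_eq_inter]
  exact sum_comm

theorem sum_degree_le {c : ℕ} (h : ∀ i ∈ E, #(R ∩ S i) ≤ c) :
    ∑ w ∈ R, degree E S w ≤ #E * c := by
  rw [← sum_card_inter_eq_sum_degree]
  simpa using sum_le_card_nsmul E _ c h

theorem mul_card_le_sum_degree {k : ℕ} (h : ∀ w ∈ R, k ≤ degree E S w) :
    k * #R ≤ ∑ w ∈ R, degree E S w := by
  simpa [mul_comm] using card_nsmul_le_sum R _ k h

theorem sum_add_card_le_sum [DecidableEq ι] {J : Finset ι} {f g : ι → ℕ} (hJ : J ⊆ E)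
    (hJfg : ∀ i ∈ J, f i + 1 ≤ g i) (hfg : ∀ i ∈ E, f i ≤ g i) :
    ∑ i ∈ E, f i + #J ≤ ∑ i ∈ E, g i := by
  rw [← sum_sdiff hJ, ← sum_sdiff (f := g) hJ, card_eq_sum_ones, add_assoc, ← sum_add_distrib]
  exact add_le_add (sum_le_sum fun i hi => hfg i (mem_sdiff.mp hi).1) (sum_le_sum hJfg)

theorem ne_of_card_inter_lt {i j : ι} (h : #(S i ∩ S j) < #(S i)) : i ≠ j := by
  rintro rfl
  simp at h

theorem card_inter_add_three_le (hdeg : ∀ w ∈ R, 0 < degree E S w)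
    (hno : ∀ i j, 1 < #(R \ (S i ∪ S j))) (i : ι) : #(R ∩ S i) + 3 ≤ #R := by
  obtain ⟨w, hw⟩ : (R \ S i).Nonempty := by
    have := hno i i
    rw [union_self] at this
    exact card_pos.mp (by omega)
  obtain ⟨j, -, hwj⟩ : ∃ j ∈ E, w ∈ S j := by
    simpa [degree, filter_nonempty_iff] using card_pos.mp (hdeg w (mem_sdiff.mp hw).1)
  have hsub : R \ (S i ∪ S j) ⊆ (R \ S i).erase w := by
    intro u hu
    simp only [mem_sdiff, mem_union, not_or, mem_erase] at hu ⊢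
    exact ⟨fun h => hu.2.2 (h ▸ hwj), hu.1, hu.2.1⟩
  have := card_le_card hsub
  rw [card_erase_of_mem hw] at this
  have := hno i j
  have := card_sdiff_add_card_inter R (S i)
  omega

theorem inter_nonempty_of_card_inter_eq_two (hR : #R = 5) (hno : ∀ i j, 1 < #(R \ (S i ∪ S j)))
    {i j : ι} (hi : #(R ∩ S i) = 2) (hj : #(R ∩ S j) = 2) : ((R ∩ S i) ∩ (R ∩ S j)).Nonempty := by
  rw [nonempty_iff_ne_empty]
  intro hdisj
  have := card_union_add_card_inter (R ∩ S i) (R ∩ S j)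
  rw [hdisj, card_empty, ← inter_union_distrib_left, hi, hj] at this
  have := hno i j
  have := card_sdiff_add_card_inter R (S i ∪ S j)
  omega

theorem exists_two_cover_of_card_eq_five (hE : #E ≤ 13) (hR : #R = 5)
    (hdeg : ∀ w ∈ R, 4 ≤ degree E S w) : ∃ i j, #(R \ (S i ∪ S j)) ≤ 1 := by
  by_contra! hno
  have h2 : ∀ i, #(R ∩ S i) ≤ 2 := fun i => by
    have := card_inter_add_three_le (fun w hw => (hdeg w hw).trans_lt' (by norm_num)) hno i
    omega
  set D := {i ∈ E | #(R ∩ S i) = 2}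
  have hmeet : ∀ i ∈ D, ∀ j ∈ D, ((R ∩ S i) ∩ (R ∩ S j)).Nonempty := fun i hi j hj =>
    inter_nonempty_of_card_inter_eq_two hR hno (mem_filter.mp hi).2 (mem_filter.mp hj).2
  by_cases hstar : ∃ p, ∀ i ∈ D, p ∈ R ∩ S i
  · obtain ⟨p, hp⟩ := hstar
    have hle : ∀ i ∈ E, #(R.erase p ∩ S i) ≤ 1 := by
      intro i hi
      rw [erase_inter]
      by_cases hD : #(R ∩ S i) = 2
      · rw [card_erase_of_mem (hp i (mem_filter.mpr ⟨hi, hD⟩)), hD]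
      · exact card_erase_le.trans (by have := h2 i; omega)
    have := sum_degree_le hle
    have := mul_card_le_sum_degree (R := R.erase p) fun w hw => hdeg w (mem_of_mem_erase hw)
    have := pred_card_le_card_erase (s := R) (a := p)
    omega
  push Not at hstar
  obtain ⟨K, hK, hDK⟩ := exists_card_le_three_of_intersecting (fun i hi => (mem_filter.mp hi).2)
    hmeet hstar
  -- The traces of size two lie in `K`, so a member meeting `R \ K` has a trace of size one.
  have hpt : ∀ i ∈ E, #(R ∩ S i) + #((R \ K) ∩ S i) ≤ 2 := by
    intro i hi
    rcases ((R \ K) ∩ S i).eq_empty_or_nonempty with h | ⟨p, hp⟩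
    · rw [h, card_empty]
      exact h2 i
    have hD : #(R ∩ S i) ≠ 2 := fun h2 =>
      (mem_sdiff.mp (mem_inter.mp hp).1).2
        (hDK i (mem_filter.mpr ⟨hi, h2⟩) (inter_subset_inter_right sdiff_subset hp))
    have := card_le_card (inter_subset_inter_right (sdiff_subset (s := R) (t := K)) (u := S i))
    have := h2 i
    omega
  have := sum_le_sum hpt
  rw [sum_add_distrib, sum_card_inter_eq_sum_degree, sum_card_inter_eq_sum_degree, sum_const,
    smul_eq_mul] at this
  have := mul_card_le_sum_degree hdeg
  have := mul_card_le_sum_degree (R := R \ K) fun w hw => hdeg w (mem_sdiff.mp hw).1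
  have := le_card_sdiff K R
  omega

theorem exists_two_cover [Nonempty ι] (hE : #E ≤ 13) (hR : #R ≤ 5)
    (hdeg : ∀ w ∈ R, 4 ≤ degree E S w) : ∃ i j, #(R \ (S i ∪ S j)) ≤ 1 := by
  rcases hR.lt_or_eq with hR | hR
  · by_contra! hno
    have hsmall := card_inter_add_three_le (E := E)
      (fun w hw => (hdeg w hw).trans_lt' (by norm_num)) hno
    have := sum_degree_le (E := E) (S := S) (R := R) (c := #R - 3) fun i _ => by
      have := hsmall i
      omega
    have := mul_card_le_sum_degree hdeg
    have := Nat.mul_le_mul_right (#R - 3) hE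
    have := hsmall (Classical.arbitrary ι)
    omega
  · exact exists_two_cover_of_card_eq_five hE hR hdeg

section NinePoints

variable [DecidableEq ι]

theorem inter_nonempty_of_card_eq_three (hE : #E ≤ 13) (hR : #R = 9) (hS : ∀ i, S i ⊆ R)
    (hdeg : ∀ w ∈ R, 4 ≤ degree E S w) (hno : ∀ i j k, #(S i ∪ S j ∪ S k) ≤ 7) {a b : ι}
    (ha : a ∈ E) (hb : b ∈ E) (ha3 : #(S a) = 3) (hb3 : #(S b) = 3) : (S a ∩ S b).Nonempty := by
  rw [nonempty_iff_ne_empty]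
  intro hdisj
  have hab : a ≠ b := ne_of_card_inter_lt (S := S) (by simp [hdisj, ha3])
  have hX : #(S a ∪ S b) = 6 := by
    have := card_union_add_card_inter (S a) (S b)
    rw [hdisj, card_empty, ha3, hb3] at this
    omega
  have hO : #(R \ (S a ∪ S b)) = 3 := by
    rw [card_sdiff_of_subset (union_subset (hS a) (hS b)), hR, hX]
  have hpt : ∀ i ∈ E, #((R \ (S a ∪ S b)) ∩ S i) ≤ 1 := fun i _ => by
    have := card_sdiff_inter_add_card_le R (S a ∪ S b) (S i)
    have := hno a b i
    omega
  have hcount := sum_add_card_le_sum (J := {a, b}) (g := fun _ => 1)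
    (by simp [insert_subset_iff, ha, hb]) (by simp +contextual [Finset.ext_iff]) hpt
  rw [sum_card_inter_eq_sum_degree, card_pair hab, sum_const, smul_eq_mul, mul_one] at hcount
  have := mul_card_le_sum_degree (R := R \ (S a ∪ S b)) fun w hw => hdeg w (mem_sdiff.mp hw).1
  omega

theorem exists_card_inter_le_one (hS : ∀ i, S i ⊆ R) (hdeg : ∀ w ∈ R, degree E S w ≤ 5)
    (hT : 10 ≤ #{i ∈ E | #(S i) = 3}) {a : ι} (ha : a ∈ E) (ha3 : #(S a) = 3) :
    ∃ b ∈ E, #(S b) = 3 ∧ b ≠ a ∧ #(S a ∩ S b) ≤ 1 := by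
  by_contra! h
  have hcount := sum_add_card_le_sum (J := {a}) (f := fun i => if #(S i) = 3 then 2 else 0)
    (g := fun i => #(S a ∩ S i)) (by simpa) (by simp [ha3]) fun i hi => by
      split_ifs with h3
      · rcases eq_or_ne i a with rfl | hia
        · simp [ha3]
        · exact h i hi h3 hia
      · exact Nat.zero_le _
  rw [sum_card_inter_eq_sum_degree, sum_ite, sum_const_zero, sum_const, smul_eq_mul,
    card_singleton] at hcount
  have : ∑ w ∈ S a, degree E S w ≤ 3 * 5 := by
    simpa [ha3] using sum_le_card_nsmul (S a) (fun w => degree E S w) 5 fun w hw => hdeg w (hS a hw)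
  omega

theorem exists_third_petal (hE : #E ≤ 13) (hR : #R = 9) (hS : ∀ i, S i ⊆ R)
    (hdeg : ∀ w ∈ R, 4 ≤ degree E S w) (hno : ∀ i j k, #(S i ∪ S j ∪ S k) ≤ 7)
    (hsmall : #{i ∈ E | #(S i) ≠ 3} ≤ 3)
    (hmeet : ∀ i ∈ E, ∀ j ∈ E, #(S i) = 3 → #(S j) = 3 → (S i ∩ S j).Nonempty)
    {a b : ι} {z : α} (ha : a ∈ E) (hb : b ∈ E) (ha3 : #(S a) = 3) (hb3 : #(S b) = 3)
    (hab : S a ∩ S b = {z}) : ∃ c ∈ E, #(S c) = 3 ∧ S c ∩ S a = {z} ∧ S c ∩ S b = {z} := by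
  have hab' : a ≠ b := ne_of_card_inter_lt (S := S) (by simp [hab, ha3])
  set O := R \ (S a ∪ S b)
  have hX : #(S a ∪ S b) = 5 := by
    have := card_union_add_card_inter (S a) (S b)
    rw [hab, card_singleton, ha3, hb3] at this
    omega
  have hO2 : ∀ i, #(O ∩ S i) ≤ 2 := fun i => by
    have : #(O ∩ S i) + _ ≤ _ := card_sdiff_inter_add_card_le R (S a ∪ S b) (S i)
    have := hno a b i
    omega
  obtain ⟨c, hc, hc3, hcO⟩ : ∃ c ∈ E, #(S c) = 3 ∧ 2 ≤ #(O ∩ S c) := by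
    by_contra! h
    have hcount := sum_add_card_le_sum (E := E) (J := {a, b}) (f := fun i => #(O ∩ S i))
      (g := fun i => if #(S i) = 3 then 1 else 2) (by simp [insert_subset_iff, ha, hb])
      (by simp +contextual [O, Finset.ext_iff, ha3, hb3]) fun i hi => by
        split_ifs with h3
        exacts [Nat.le_of_lt_succ (h i hi h3), hO2 i]
    rw [sum_card_inter_eq_sum_degree, card_pair hab', sum_ite, sum_const, sum_const, smul_eq_mul,
      smul_eq_mul] at hcount
    have := mul_card_le_sum_degree (R := O) fun w hw => hdeg w (mem_sdiff.mp hw).1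
    have : #O = _ := card_sdiff_of_subset (union_subset (hS a) (hS b))
    have := card_filter_add_card_filter_not (s := E) (fun i => #(S i) = 3)
    simp only [ne_eq] at hsmall
    omega
  have hcX : #(S c ∩ (S a ∪ S b)) ≤ 1 := by
    have hsplit := card_inter_add_card_sdiff (S c) (S a ∪ S b)
    have : S c \ (S a ∪ S b) = O ∩ S c := by
      ext u
      simp only [O, mem_sdiff, mem_inter]
      exact ⟨fun h => ⟨⟨hS c h.1, h.2⟩, h.1⟩, fun h => ⟨h.2, h.1.2⟩⟩
    rw [this] at hsplit
    omega
  exact ⟨c, hc, hc3, inter_eq_singleton_of_card_inter_union_le_one hab hcX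
    (hmeet c hc a ha hc3 ha3) (hmeet c hc b hb hc3 hb3)⟩

theorem le_degree_add_of_petals (hR : #R = 9) (hS : ∀ i, S i ⊆ R)
    (hdeg : ∀ w ∈ R, 4 ≤ degree E S w) (hno : ∀ i j k, #(S i ∪ S j ∪ S k) ≤ 7)
    (h3 : ∀ i, #(S i) ≤ 3)
    (hmeet : ∀ i ∈ E, ∀ j ∈ E, #(S i) = 3 → #(S j) = 3 → (S i ∩ S j).Nonempty)
    {a b c : ι} {z : α} (ha : a ∈ E) (hb : b ∈ E) (hc : c ∈ E) (ha3 : #(S a) = 3)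
    (hb3 : #(S b) = 3) (hc3 : #(S c) = 3) (hab : S a ∩ S b = {z}) (hca : S c ∩ S a = {z})
    (hcb : S c ∩ S b = {z}) (hfree : ∃ y ∈ E, #(S y) = 3 ∧ z ∉ S y) :
    11 ≤ degree E S z + 2 * #{i ∈ E | #(S i) ≠ 3} := by
  set U := S a ∪ S b ∪ S c
  have hQ : ∀ i, (R \ U) ∩ S i = S i \ U := fun i => by
    ext u
    simp only [mem_sdiff, mem_inter]
    exact ⟨fun h => ⟨h.2, h.1.2⟩, fun h => ⟨⟨hS i h.1, h.2⟩, h.1⟩⟩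
  have petals : ∀ i ∈ E, #(S i) = 3 → ((S i ∩ S a).Nonempty ∧ (S i ∩ S b).Nonempty) ∧
      (S i ∩ S c).Nonempty := fun i hi hi3 =>
    ⟨⟨hmeet i hi a ha hi3 ha3, hmeet i hi b hb hi3 hb3⟩, hmeet i hi c hc hi3 hc3⟩
  have hpt : ∀ i ∈ E, #((R \ U) ∩ S i) ≤
      (if z ∈ S i then 1 else 0) + if #(S i) = 3 then 0 else 2 := by
    intro i hi
    rw [hQ i]
    by_cases hi3 : #(S i) = 3
    · obtain ⟨⟨hia, hib⟩, hic⟩ := petals i hi hi3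
      by_cases hzi : z ∈ S i
      · obtain ⟨y, hy, hy3, hzy⟩ := hfree
        obtain ⟨⟨hya, hyb⟩, hyc⟩ := petals y hy hy3
        rw [if_pos hzi, if_pos hi3]
        exact card_sdiff_le_one_of_inter_eq_singleton hab hca hcb hi3 hzi hzy (h3 y) hya hyb hyc
          (hmeet i hi y hy hi3 hy3)
      · rw [if_neg hzi, if_pos hi3, Nat.le_zero, card_eq_zero, sdiff_eq_empty_iff_subset]
        exact subset_union_of_inter_eq_singleton hab hca hcb hzi (h3 i) hia hib hic
    · simp only [hi3, if_false]
      have := card_le_card (sdiff_subset (s := S i) (t := U))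
      have := h3 i
      split_ifs <;> omega
  have hz : ∀ {i j}, S i ∩ S j = {z} → z ∈ S i ∧ z ∈ S j := fun h =>
    mem_inter.mp (h ▸ mem_singleton_self z)
  have hcount := sum_add_card_le_sum (J := {a, b, c}) (by simp [insert_subset_iff, ha, hb, hc])
    (by
      simp only [mem_insert, mem_singleton]
      rintro i (rfl | rfl | rfl) <;>
        simp +contextual [Finset.ext_iff, U, hz hab, hz hca, ha3, hb3, hc3]) hpt
  have hab' : a ≠ b := ne_of_card_inter_lt (S := S) (by simp [hab, ha3])
  have hca' : c ≠ a := ne_of_card_inter_lt (S := S) (by simp [hca, hc3])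
  have hcb' : c ≠ b := ne_of_card_inter_lt (S := S) (by simp [hcb, hc3])
  rw [sum_card_inter_eq_sum_degree, sum_add_distrib, sum_boole, Nat.cast_id, sum_ite,
    sum_const_zero, sum_const, smul_eq_mul, card_insert_of_notMem (by simp [hab', hca'.symm]),
    card_pair hcb'.symm] at hcount
  have := mul_card_le_sum_degree (R := R \ U) fun w hw => hdeg w (mem_sdiff.mp hw).1
  have := card_sdiff_of_subset (show U ⊆ R from union_subset (union_subset (hS a) (hS b)) (hS c))
  have : #U ≤ 7 := hno a b c
  simp only [ne_eq, degree]
  omega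

theorem exists_three_cover_of_card_eq_nine (hE : #E ≤ 13) (hR : #R = 9) (hS : ∀ i, S i ⊆ R)
    (hdeg : ∀ w ∈ R, 4 ≤ degree E S w) (hdeg5 : ∀ w ∈ R, degree E S w ≤ 5)
    (h3 : ∀ i, #(S i) ≤ 3) : ∃ i j k, 8 ≤ #(S i ∪ S j ∪ S k) := by
  by_contra! hno
  replace hno : ∀ i j k, #(S i ∪ S j ∪ S k) ≤ 7 := fun i j k => Nat.le_of_lt_succ (hno i j k)
  have hsum : ∑ w ∈ R, degree E S w + #{i ∈ E | #(S i) ≠ 3} ≤ 3 * #E := by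
    rw [← sum_card_inter_eq_sum_degree, card_filter, ← sum_add_distrib, mul_comm, ← smul_eq_mul]
    exact sum_le_card_nsmul E _ 3 fun i _ => by
      rw [inter_eq_right.mpr (hS i)]
      have := h3 i
      split_ifs <;> omega
  -- The other eight points have degree at least four.
  have hcore : ∀ z ∈ R, 32 + degree E S z ≤ ∑ w ∈ R, degree E S w := fun z hz => by
    rw [← add_sum_erase R _ hz]
    have := mul_card_le_sum_degree (R := R.erase z) fun w hw => hdeg w (mem_of_mem_erase hw)
    rw [card_erase_of_mem hz, hR] at this
    omega
  have hsplit := card_filter_add_card_filter_not (s := E) (fun i => #(S i) = 3)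
  simp only [← ne_eq] at hsplit
  obtain ⟨w, hw⟩ : R.Nonempty := card_pos.mp (by omega)
  have := hcore w hw
  have := hdeg w hw
  have hsmall : #{i ∈ E | #(S i) ≠ 3} ≤ 3 := by omega
  have hT : 10 ≤ #{i ∈ E | #(S i) = 3} := by omega
  have hmeet : ∀ i ∈ E, ∀ j ∈ E, #(S i) = 3 → #(S j) = 3 → (S i ∩ S j).Nonempty :=
    fun i hi j hj => inter_nonempty_of_card_eq_three hE hR hS hdeg hno hi hj
  obtain ⟨a, ha, ha3⟩ : ∃ a ∈ E, #(S a) = 3 := by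
    simpa [filter_nonempty_iff] using card_pos.mp (by omega : 0 < #{i ∈ E | #(S i) = 3})
  obtain ⟨b, hb, hb3, -, hab⟩ := exists_card_inter_le_one hS hdeg5 hT ha ha3
  obtain ⟨z, hab⟩ := card_eq_one.mp (le_antisymm hab (card_pos.mpr (hmeet a ha b hb ha3 hb3)))
  obtain ⟨c, hc, hc3, hca, hcb⟩ :=
    exists_third_petal hE hR hS hdeg hno hsmall hmeet ha hb ha3 hb3 hab
  have hzR : z ∈ R := hS a (mem_of_mem_inter_left (hab ▸ mem_singleton_self z))
  have hfree : ∃ y ∈ E, #(S y) = 3 ∧ z ∉ S y := by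
    by_contra! h
    have := card_le_card (monotone_filter_right E fun i => h i)
    have := hdeg5 z hzR
    simp only [degree] at this
    omega
  have := le_degree_add_of_petals hR hS hdeg hno h3 hmeet ha hb hc ha3 hb3 hc3 hab hca hcb hfree
  have := hcore z hzR
  omega

end NinePoints

theorem exists_three_cover [Nonempty ι] (hE : #E ≤ 13) (hR : #R ≤ 9)
    (hdeg : ∀ w ∈ R, 4 ≤ degree E S w) (hmax : ∀ w ∈ R, degree E S w + #R ≤ 14) :
    ∃ i j k, #(R \ (S i ∪ S j ∪ S k)) ≤ 1 := by
  by_cases hbig : ∃ i, #(R \ S i) ≤ 5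
  · obtain ⟨i, hi⟩ := hbig
    obtain ⟨j, k, hjk⟩ := exists_two_cover hE hi fun w hw => hdeg w (mem_sdiff.mp hw).1
    refine ⟨i, j, k, ?_⟩
    rwa [Finset.sdiff_sdiff_left', ← sdiff_union_distrib, ← union_assoc] at hjk
  push Not at hbig
  have hcov : ∀ i, #(R ∩ S i) + 6 ≤ #R := fun i => by
    have := hbig i
    have := card_sdiff_add_card_inter R (S i)
    omega
  have := hcov (Classical.arbitrary ι)
  rcases (by omega : #R ≤ 8 ∨ #R = 9) with h8 | h9
  · have := sum_degree_le (E := E) (S := S) (R := R) (c := #R - 6) fun i _ => by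
      have := hcov i
      omega
    have := mul_card_le_sum_degree hdeg
    have := Nat.mul_le_mul_right (#R - 6) hE
    omega
  classical
  have htrace : ∀ w ∈ R, degree E (fun i => R ∩ S i) w = degree E S w := fun w hw => by
    simp [degree, hw]
  obtain ⟨i, j, k, h⟩ := exists_three_cover_of_card_eq_nine (S := fun i => R ∩ S i) hE h9
    (fun i => inter_subset_left) (fun w hw => htrace w hw ▸ hdeg w hw)
    (fun w hw => by have := hmax w hw; rw [htrace w hw]; omega) fun i => by have := hcov i; omega
  refine ⟨i, j, k, ?_⟩
  rw [← inter_union_distrib_left, ← inter_union_distrib_left] at h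
  have := card_sdiff_add_card_inter R (S i ∪ S j ∪ S k)
  omega

end FamilyCover

namespace SimpleGraph

variable [DecidableEq V] (G : SimpleGraph V) [DecidableRel G.Adj]

def closedNeighborFinset (v : V) : Finset V := insert v (G.neighborFinset v)

variable {G}

theorem mem_closedNeighborFinset {v w : V} :
    w ∈ G.closedNeighborFinset v ↔ w = v ∨ G.Adj v w := by
  simp [closedNeighborFinset]

theorem mem_closedNeighborFinset_comm {v w : V} :
    w ∈ G.closedNeighborFinset v ↔ v ∈ G.closedNeighborFinset w := by
  simp only [mem_closedNeighborFinset, eq_comm, adj_comm]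

theorem card_closedNeighborFinset (v : V) : #(G.closedNeighborFinset v) = G.degree v + 1 := by
  rw [closedNeighborFinset, card_insert_of_notMem (by simp), card_neighborFinset_eq_degree]

theorem card_compl_closedNeighborFinset (v : V) :
    #(univ \ G.closedNeighborFinset v) + G.degree v + 1 = Fintype.card V := by
  rw [add_assoc, ← card_closedNeighborFinset, card_sdiff_add_card_eq_card (subset_univ _),
    card_univ]

theorem degree_erase_closedNeighborFinset {v w : V} (hvw : w ∉ G.closedNeighborFinset v) :
    FamilyCover.degree (univ.erase v) G.closedNeighborFinset w = G.degree w + 1 := by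
  rw [FamilyCover.degree, ← card_closedNeighborFinset]
  congr 1
  ext x
  simp only [mem_filter, mem_erase, mem_univ, and_true, mem_closedNeighborFinset_comm (w := w)]
  exact ⟨And.right, fun hx => ⟨by rintro rfl; exact hvw (mem_closedNeighborFinset_comm.mp hx), hx⟩⟩

theorem mem_closedN_of_mem_closedNeighborFinset {S : Set V} {w u : V} (hw : w ∈ S)
    (hu : u ∈ G.closedNeighborFinset w) : u ∈ closedN G S := by
  rcases mem_closedNeighborFinset.mp hu with rfl | h
  exacts [Or.inl hw, Or.inr ⟨w, hw, h⟩]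

theorem card_le_ncard_closedN_add (v x y z : V) :
    Fintype.card V ≤ (closedN G {v, x, y, z}).ncard + #((univ \ G.closedNeighborFinset v) \
      (G.closedNeighborFinset x ∪ G.closedNeighborFinset y ∪ G.closedNeighborFinset z)) := by
  rw [← Nat.card_eq_fintype_card, ← Set.ncard_add_ncard_compl (closedN G {v, x, y, z}),
    ← Set.ncard_coe_finset]
  gcongr
  · exact Set.toFinite _
  intro u hu
  have hN : ∀ w ∈ ({v, x, y, z} : Set V), u ∉ G.closedNeighborFinset w := fun w hw h =>
    hu (mem_closedN_of_mem_closedNeighborFinset hw h)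
  simp only [Set.mem_insert_iff, Set.mem_singleton_iff, forall_eq_or_imp, forall_eq] at hN
  simp [hN]

end SimpleGraph

open SimpleGraph in
/-- In a graph of order 14 with `δ ≥ 3` and `Δ ≥ 4`, four vertices dominate at least 13 vertices. -/
theorem supercubic_order14 (G : SimpleGraph V) (h14 : Fintype.card V = 14)
    (hmin : ∀ v : V, 3 ≤ (G.neighborSet v).ncard)
    (hmax : ∃ v : V, 4 ≤ (G.neighborSet v).ncard) :
    ∃ v₁ v₂ v₃ v₄ : V, 13 ≤ (closedN G {v₁, v₂, v₃, v₄}).ncard := by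
  classical
  have hdeg : ∀ v, (G.neighborSet v).ncard = G.degree v := fun v => by
    rw [Set.ncard_eq_toFinset_card', ← neighborFinset_def, card_neighborFinset_eq_degree]
  have : Nonempty V := Fintype.card_pos_iff.mp (by omega)
  obtain ⟨v, hv⟩ := G.exists_maximal_degree_vertex
  have hΔ : 4 ≤ G.degree v := by
    obtain ⟨u, hu⟩ := hmax
    exact hv ▸ (hdeg u ▸ hu).trans (G.degree_le_maxDegree u)
  have hW := card_compl_closedNeighborFinset (G := G) v
  obtain ⟨x, y, z, hxyz⟩ := FamilyCover.exists_three_cover (E := univ.erase v)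
    (S := G.closedNeighborFinset) (R := univ \ G.closedNeighborFinset v)
    (by rw [card_erase_of_mem (mem_univ v), card_univ, h14]) (by omega)
    (fun w hw => by
      rw [degree_erase_closedNeighborFinset (mem_sdiff.mp hw).2]
      have := hdeg w ▸ hmin w
      omega)
    (fun w hw => by
      rw [degree_erase_closedNeighborFinset (mem_sdiff.mp hw).2]
      have := hv ▸ G.degree_le_maxDegree w
      omega)
  have := card_le_ncard_closedN_add (G := G) v x y z
  exact ⟨v, x, y, z, by omega⟩
end

section
/- Let G be a connected cubic graph of order 14 with γ(G) = 5, let P = {v₁, v₂} be a maximum packing in G (so ρ(G) = 2), and suppose every vertex of X = V(G) \ N[P] has at most one neighbor in X. Then: (i) |X| = 6, (ii) the boundary Y = N[P] \ P has |Y| = 6, (iii) the subgraph induced on X is a perfect matching (three disjoint edges), (iv) Y is an independent set, and (v) every vertex of Y has exactly two neighbors in X and every vertex of X has exactly two neighbors in Y. -/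
variable {V : Type*} [Fintype V]

/-- A packing: closed neighborhoods of distinct vertices are pairwise disjoint. -/
def IsPacking (G : SimpleGraph V) (P : Set V) : Prop :=
  P.Pairwise fun u w => Disjoint (closedN G {u}) (closedN G {w})


private lemma squeeze_aux {V : Type*} [Fintype V] (G : SimpleGraph V) (X Y : Set V)
    (hX6 : X.ncard = 6) (hY6 : Y.ncard = 6)
    (hxlow : ∀ x ∈ X, 2 ≤ (G.neighborSet x ∩ Y).ncard)
    (hyhigh : ∀ y ∈ Y, (G.neighborSet y ∩ X).ncard ≤ 2) :
    (∀ x ∈ X, (G.neighborSet x ∩ Y).ncard = 2) ∧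
    (∀ y ∈ Y, (G.neighborSet y ∩ X).ncard = 2) := by
  classical
  have hconv : ∀ (v : V) (S : Set V),
      (G.neighborSet v ∩ S).ncard = (S.toFinset.filter (fun u => G.Adj v u)).card := by
    intro v S
    rw [Set.ncard_eq_toFinset_card']
    congr 1
    ext u
    simp [SimpleGraph.mem_neighborSet, and_comm]
  have hdc : ∑ x ∈ X.toFinset, (Y.toFinset.filter (fun y => G.Adj x y)).card
      = ∑ y ∈ Y.toFinset, (X.toFinset.filter (fun x => G.Adj y x)).card := by
    simp only [Finset.card_filter]
    rw [Finset.sum_comm]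
    refine Finset.sum_congr rfl fun y _ => Finset.sum_congr rfl fun x _ => ?_
    exact if_congr (G.adj_comm x y) rfl rfl
  have hXc : X.toFinset.card = 6 := by rw [← Set.ncard_eq_toFinset_card']; exact hX6
  have hYc : Y.toFinset.card = 6 := by rw [← Set.ncard_eq_toFinset_card']; exact hY6
  have hdc' : ∑ x ∈ X.toFinset, (G.neighborSet x ∩ Y).ncard
      = ∑ y ∈ Y.toFinset, (G.neighborSet y ∩ X).ncard := by
    simp only [hconv]
    exact hdc
  have hup : ∑ y ∈ Y.toFinset, (G.neighborSet y ∩ X).ncard ≤ 12 := by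
    calc ∑ y ∈ Y.toFinset, (G.neighborSet y ∩ X).ncard ≤ Y.toFinset.card • 2 :=
          Finset.sum_le_card_nsmul _ _ _ (fun y hy => hyhigh y (Set.mem_toFinset.mp hy))
      _ = 12 := by rw [hYc, smul_eq_mul]
  have hlow : 12 ≤ ∑ x ∈ X.toFinset, (G.neighborSet x ∩ Y).ncard := by
    calc (12 : ℕ) = X.toFinset.card • 2 := by rw [hXc, smul_eq_mul]
      _ ≤ ∑ x ∈ X.toFinset, (G.neighborSet x ∩ Y).ncard :=
          Finset.card_nsmul_le_sum _ _ _ (fun x hx => hxlow x (Set.mem_toFinset.mp hx))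
  have hsumX : ∑ x ∈ X.toFinset, (G.neighborSet x ∩ Y).ncard = 12 :=
    le_antisymm (le_trans (le_of_eq hdc') hup) hlow
  have hsumY : ∑ y ∈ Y.toFinset, (G.neighborSet y ∩ X).ncard = 12 := by
    rw [← hdc']; exact hsumX
  constructor
  · intro x hx
    have hx' : x ∈ X.toFinset := Set.mem_toFinset.mpr hx
    have h1 := Finset.add_sum_erase _ (fun v => (G.neighborSet v ∩ Y).ncard) hx'
    beta_reduce at h1
    rw [hsumX] at h1
    have h2 : (X.toFinset.erase x).card • 2 ≤
        ∑ z ∈ X.toFinset.erase x, (G.neighborSet z ∩ Y).ncard :=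
      Finset.card_nsmul_le_sum _ _ _
        (fun z hz => hxlow z (Set.mem_toFinset.mp (Finset.mem_erase.mp hz).2))
    rw [Finset.card_erase_of_mem hx', hXc, smul_eq_mul] at h2
    have h3 := hxlow x hx
    omega
  · intro y hy
    have hy' : y ∈ Y.toFinset := Set.mem_toFinset.mpr hy
    have h1 := Finset.add_sum_erase _ (fun v => (G.neighborSet v ∩ X).ncard) hy'
    beta_reduce at h1
    rw [hsumY] at h1
    have h2 : ∑ z ∈ Y.toFinset.erase y, (G.neighborSet z ∩ X).ncard ≤
        (Y.toFinset.erase y).card • 2 :=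
      Finset.sum_le_card_nsmul _ _ _
        (fun z hz => hyhigh z (Set.mem_toFinset.mp (Finset.mem_erase.mp hz).2))
    rw [Finset.card_erase_of_mem hy', hYc, smul_eq_mul] at h2
    have h3 := hyhigh y hy
    omega

/-- Structure of a connected cubic graph of order 14 with `γ = 5` and maximum packing
`P = {v₁, v₂}`, when every vertex of `X = V ∖ N[P]` has at most one neighbor in `X`. -/
theorem structure_order14 (G : SimpleGraph V) (h14 : Fintype.card V = 14)
    (hconn : G.Connected) (hcub : ∀ v : V, (G.neighborSet v).ncard = 3)
    (hγ : domNum G = 5) (v₁ v₂ : V) (hne : v₁ ≠ v₂)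
    (hP : IsPacking G {v₁, v₂})
    (hmax : ∀ Q : Set V, IsPacking G Q → Q.ncard ≤ 2)
    (hX1 : ∀ x ∈ (Set.univ \ closedN G {v₁, v₂} : Set V),
      (G.neighborSet x ∩ (Set.univ \ closedN G {v₁, v₂})).ncard ≤ 1) :
    (Set.univ \ closedN G {v₁, v₂} : Set V).ncard = 6 ∧
    (closedN G {v₁, v₂} \ {v₁, v₂} : Set V).ncard = 6 ∧
    (∀ x ∈ (Set.univ \ closedN G {v₁, v₂} : Set V),
      (G.neighborSet x ∩ (Set.univ \ closedN G {v₁, v₂})).ncard = 1) ∧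
    (∀ u ∈ (closedN G {v₁, v₂} \ {v₁, v₂} : Set V),
      ∀ w ∈ (closedN G {v₁, v₂} \ {v₁, v₂} : Set V), ¬ G.Adj u w) ∧
    (∀ y ∈ (closedN G {v₁, v₂} \ {v₁, v₂} : Set V),
      (G.neighborSet y ∩ (Set.univ \ closedN G {v₁, v₂})).ncard = 2) ∧
    (∀ x ∈ (Set.univ \ closedN G {v₁, v₂} : Set V),
      (G.neighborSet x ∩ (closedN G {v₁, v₂} \ {v₁, v₂})).ncard = 2) := by
  classical
  set NP := closedN G {v₁, v₂} with hNPdef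
  set X : Set V := Set.univ \ NP with hXdef
  set Y : Set V := NP \ {v₁, v₂} with hYdef
  -- basic counting
  have hcN : ∀ v : V, closedN G {v} = insert v (G.neighborSet v) := by
    intro v; ext u
    simp [closedN, SimpleGraph.mem_neighborSet, eq_comm]
  have hcN4 : ∀ v : V, (closedN G {v}).ncard = 4 := by
    intro v
    rw [hcN v, Set.ncard_insert_of_notMem (by simp) (Set.toFinite _), hcub v]
  have hdisj : Disjoint (closedN G {v₁}) (closedN G {v₂}) :=
    hP (by simp) (by simp) hne
  have hNPu : NP = closedN G {v₁} ∪ closedN G {v₂} := by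
    ext u; simp only [hNPdef, closedN, Set.mem_setOf_eq, Set.mem_union,
      Set.mem_insert_iff, Set.mem_singleton_iff]
    constructor
    · rintro (h | ⟨w, (rfl | rfl), hw⟩)
      · rcases h with rfl | rfl
        · exact Or.inl (Or.inl rfl)
        · exact Or.inr (Or.inl rfl)
      · exact Or.inl (Or.inr ⟨w, rfl, hw⟩)
      · exact Or.inr (Or.inr ⟨w, rfl, hw⟩)
    · rintro ((h | ⟨w, rfl, hw⟩) | (h | ⟨w, rfl, hw⟩))
      · exact Or.inl (Or.inl h)
      · exact Or.inr ⟨w, Or.inl rfl, hw⟩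
      · exact Or.inl (Or.inr h)
      · exact Or.inr ⟨w, Or.inr rfl, hw⟩
  have hNP8 : NP.ncard = 8 := by
    rw [hNPu, Set.ncard_union_eq hdisj (Set.toFinite _) (Set.toFinite _), hcN4, hcN4]
  have hsub : ({v₁, v₂} : Set V) ⊆ NP := fun u hu => Or.inl hu
  have hX6 : X.ncard = 6 := by
    rw [hXdef, Set.ncard_diff (Set.subset_univ _), Set.ncard_univ,
      Nat.card_eq_fintype_card, h14, hNP8]
  have hY6 : Y.ncard = 6 := by
    rw [hYdef, Set.ncard_diff hsub, hNP8, Set.ncard_pair hne]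
  -- local degree facts
  have hXnoP : ∀ x ∈ X, ∀ u, G.Adj x u → u ≠ v₁ ∧ u ≠ v₂ := by
    intro x hx u hadj
    constructor <;> rintro rfl <;>
      exact hx.2 (Or.inr ⟨u, by simp, hadj.symm⟩)
  have hdisjXY : Disjoint X Y := by
    rw [hXdef]
    exact Set.disjoint_sdiff_left.mono_right (Set.diff_subset)
  have hdisjPX : Disjoint ({v₁, v₂} : Set V) X := by
    rw [hXdef]
    exact (Set.disjoint_sdiff_right (s := NP)).mono_left hsub
  have hdisjPY : Disjoint ({v₁, v₂} : Set V) Y := by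
    rw [hYdef]
    exact Set.disjoint_sdiff_right
  have hx3 : ∀ x ∈ X, (G.neighborSet x ∩ X).ncard + (G.neighborSet x ∩ Y).ncard = 3 := by
    intro x hx
    have hparts : G.neighborSet x = (G.neighborSet x ∩ X) ∪ (G.neighborSet x ∩ Y) := by
      ext u
      simp only [Set.mem_union, Set.mem_inter_iff, SimpleGraph.mem_neighborSet]
      constructor
      · intro h
        by_cases hu : u ∈ NP
        · refine Or.inr ⟨h, hu, ?_⟩
          rintro (rfl | rfl)
          · exact (hXnoP x hx u h).1 rfl
          · exact (hXnoP x hx u h).2 rfl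
        · exact Or.inl ⟨h, Set.mem_univ u, hu⟩
      · rintro (⟨h, _⟩ | ⟨h, _⟩) <;> exact h
    have h3 := hcub x
    rw [hparts, Set.ncard_union_eq
      (hdisjXY.mono Set.inter_subset_right Set.inter_subset_right)
      (Set.toFinite _) (Set.toFinite _)] at h3
    exact h3
  have hyadj : ∀ y ∈ Y, ∃ u, u ∈ ({v₁, v₂} : Set V) ∧ G.Adj u y := by
    intro y hy
    rcases hy.1 with h | h
    · exact absurd h hy.2
    · exact h
  have hone : ∀ y ∈ Y, (G.neighborSet y ∩ {v₁, v₂}).ncard = 1 := by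
    intro y hy
    obtain ⟨u, hu, hadj⟩ := hyadj y hy
    have hsing : G.neighborSet y ∩ {v₁, v₂} = {u} := by
      ext w
      simp only [Set.mem_inter_iff, SimpleGraph.mem_neighborSet, Set.mem_singleton_iff]
      constructor
      · rintro ⟨hadjw, hw⟩
        by_contra hwu
        have hyc : ∀ z, G.Adj z y → y ∈ closedN G ({z} : Set V) :=
          fun z h => Or.inr ⟨z, rfl, h⟩
        rcases hu with rfl | rfl <;> rcases hw with rfl | rfl
        · exact hwu rfl
        · exact (Set.disjoint_left.mp hdisj (hyc _ hadj) (hyc _ hadjw.symm)).elim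
        · exact (Set.disjoint_left.mp hdisj (hyc _ hadjw.symm) (hyc _ hadj)).elim
        · exact hwu rfl
      · rintro rfl; exact ⟨hadj.symm, hu⟩
    rw [hsing, Set.ncard_singleton]
  have hy2 : ∀ y ∈ Y, (G.neighborSet y ∩ X).ncard + (G.neighborSet y ∩ Y).ncard = 2 := by
    intro y hy
    have hparts : G.neighborSet y = (G.neighborSet y ∩ {v₁, v₂}) ∪
        ((G.neighborSet y ∩ X) ∪ (G.neighborSet y ∩ Y)) := by
      ext u
      simp only [Set.mem_union, Set.mem_inter_iff, SimpleGraph.mem_neighborSet]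
      constructor
      · intro h
        by_cases hp : u ∈ ({v₁, v₂} : Set V)
        · exact Or.inl ⟨h, hp⟩
        · by_cases hu : u ∈ NP
          · exact Or.inr (Or.inr ⟨h, hu, hp⟩)
          · exact Or.inr (Or.inl ⟨h, Set.mem_univ u, hu⟩)
      · rintro (⟨h, _⟩ | ⟨h, _⟩ | ⟨h, _⟩) <;> exact h
    have h3 := hcub y
    rw [hparts, Set.ncard_union_eq ?d1 (Set.toFinite _) (Set.toFinite _),
      Set.ncard_union_eq (hdisjXY.mono Set.inter_subset_right Set.inter_subset_right)
      (Set.toFinite _) (Set.toFinite _), hone y hy] at h3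
    · omega
    case d1 =>
      exact Disjoint.mono Set.inter_subset_right
        (Set.union_subset_union Set.inter_subset_right Set.inter_subset_right)
        (Set.disjoint_union_right.mpr ⟨hdisjPX, hdisjPY⟩)
  -- bounds for double counting
  have hxlow : ∀ x ∈ X, 2 ≤ (G.neighborSet x ∩ Y).ncard := by
    intro x hx
    have h1 := hX1 x hx
    have h2 := hx3 x hx
    omega
  have hyhigh : ∀ y ∈ Y, (G.neighborSet y ∩ X).ncard ≤ 2 := by
    intro y hy
    have := hy2 y hy
    omega
  obtain ⟨hxY2, hyX2⟩ := squeeze_aux G X Y hX6 hY6 hxlow hyhigh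
  refine ⟨hX6, hY6, ?_, ?_, hyX2, hxY2⟩
  · intro x hx
    have h1 := hx3 x hx
    have h2 := hxY2 x hx
    omega
  · intro u hu w hw hadj
    have h0 : (G.neighborSet u ∩ Y).ncard = 0 := by
      have h1 := hy2 u hu
      have h2 := hyX2 u hu
      omega
    have hempty : G.neighborSet u ∩ Y = ∅ :=
      (Set.ncard_eq_zero (Set.toFinite _)).mp h0
    have : w ∈ G.neighborSet u ∩ Y := ⟨hadj, hw⟩
    rw [hempty] at this
    exact this
end
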